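/- Let A be a Hilbert algebra and φ : A → A a map. Then φ is a closure endomorphism of A if and only if φ is a multiplier that is monotone (x ≤ y implies φ(x) ≤ φ(y)). -/
import Mathlib


/-- A Hilbert algebra: a set with implication `imp` and constant `one`. -/
class HilbertAlgebra (A : Type*) where
  imp : A → A → A
  one : A
  imp_one : ∀ x y : A, imp x (imp y x) = one
  imp_distrib : ∀ x y z : A,
    imp (imp x (imp y z)) (imp (imp x y) (imp x z)) = one
  imp_antisymm : ∀ x y : A, imp x y = one → imp y x = one → x = y

namespace HilbertAlgebra

variable {A : Type*} [HilbertAlgebra A]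

/-- The natural order of a Hilbert algebra: `x ≤ y` iff `x → y = 1`. -/
def le (x y : A) : Prop := imp x y = one

/-- A multiplier on a Hilbert algebra. -/
def IsMultiplier (φ : A → A) : Prop := ∀ x y : A, φ (imp x y) = imp x (φ y)

/-- A closure endomorphism: an endomorphism that is also a closure operator. -/
def IsClosureEndo (φ : A → A) : Prop :=
  (∀ x y : A, φ (imp x y) = imp (φ x) (φ y)) ∧
  (∀ x : A, le x (φ x)) ∧
  (∀ x : A, φ (φ x) = φ x) ∧
  (∀ x y : A, le x y → le (φ x) (φ y))

/- ### Auxiliary lemmas about Hilbert algebras -/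

lemma one_imp_eq_one {z : A} (h : imp one z = one) : z = one := by
  have h2 : imp z one = one := by
    have h3 := imp_one z (one : A)
    rwa [h] at h3
  exact imp_antisymm z one h2 h

lemma imp_self_one (x : A) : imp x one = one :=
  one_imp_eq_one (imp_one (one : A) x)

lemma imp_refl (x : A) : imp x x = one := by
  have d := imp_distrib x one x
  rw [imp_one x one] at d
  have d2 := one_imp_eq_one d
  rw [imp_self_one x] at d2
  exact one_imp_eq_one d2

lemma one_imp (x : A) : imp one x = x := by
  have h1 := imp_one x (one : A)
  have d := imp_distrib (imp one x) one x
  rw [imp_refl] at d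
  have d2 := one_imp_eq_one d
  rw [imp_self_one] at d2
  have d3 := one_imp_eq_one d2
  exact (imp_antisymm x (imp one x) h1 d3).symm

lemma le_trans' {x y z : A} (h1 : imp x y = one) (h2 : imp y z = one) :
    imp x z = one := by
  have d := imp_distrib x y z
  rw [h2, imp_self_one x] at d
  have d2 := one_imp_eq_one d
  rw [h1, one_imp] at d2
  exact d2

lemma exch {x y z : A} (h : imp x (imp y z) = one) : imp y (imp x z) = one := by
  have d := imp_distrib x y z
  rw [h, one_imp] at d
  exact le_trans' (imp_one y x) d

lemma le_imp_imp (b c : A) : imp b (imp (imp b c) c) = one :=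
  exch (imp_refl (imp b c))

lemma mono2 {b c : A} (a : A) (h : imp b c = one) :
    imp (imp a b) (imp a c) = one := by
  have d := imp_distrib a b c
  rw [h, imp_self_one a] at d
  exact one_imp_eq_one d

lemma anti {a b : A} (c : A) (h : imp a b = one) :
    imp (imp b c) (imp a c) = one :=
  exch (le_trans' h (le_imp_imp b c))

lemma contr (x y : A) : imp x (imp x y) = imp x y := by
  have d := imp_distrib x x y
  rw [imp_refl x, one_imp] at d
  exact imp_antisymm _ _ d (imp_one (imp x y) x)

/- ### Lemmas about monotone multipliers -/

lemma mult_one {φ : A → A} (hm : IsMultiplier φ) : φ one = one := by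
  have h := hm (φ one) one
  rw [imp_self_one, imp_refl] at h
  exact h

lemma mult_infl {φ : A → A} (hm : IsMultiplier φ) (x : A) :
    imp x (φ x) = one := by
  have h := hm x x
  rw [imp_refl, mult_one hm] at h
  exact h.symm

lemma mult_idem {φ : A → A} (hm : IsMultiplier φ)
    (hmono : ∀ x y : A, le x y → le (φ x) (φ y)) (x : A) :
    φ (φ x) = φ x := by
  have h1 : imp (φ x) (imp (imp (φ x) x) x) = one := le_imp_imp (φ x) x
  have h2 : le (φ (φ x)) (φ (imp (imp (φ x) x) x)) := hmono _ _ h1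
  rw [hm] at h2
  have h3 : imp (imp (imp (φ x) x) (φ x))
      (imp (imp (φ x) x) (imp (imp (φ x) x) x)) = one := mono2 _ h1
  rw [contr] at h3
  have h4 : imp (φ (φ x)) (imp (imp (φ x) x) x) = one := le_trans' h2 h3
  have h5 : imp (imp (φ x) x) (imp (φ (φ x)) x) = one := exch h4
  have h6 : le (φ (imp (φ x) x)) (φ (imp (φ (φ x)) x)) := hmono _ _ h5
  rw [hm, hm, imp_refl] at h6
  have h7 : imp (φ (φ x)) (φ x) = one := one_imp_eq_one h6
  have h8 : imp (φ x) (φ (φ x)) = one := hmono _ _ (mult_infl hm x)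
  exact imp_antisymm _ _ h7 h8

lemma mult_endo {φ : A → A} (hm : IsMultiplier φ)
    (hmono : ∀ x y : A, le x y → le (φ x) (φ y)) (x y : A) :
    φ (imp x y) = imp (φ x) (φ y) := by
  have dir1 : imp (imp (φ x) (φ y)) (imp x (φ y)) = one :=
    anti _ (mult_infl hm x)
  have l8 : imp x (imp (imp x (φ y)) (φ y)) = one := le_imp_imp x (φ y)
  have h2 : le (φ x) (φ (imp (imp x (φ y)) (φ y))) := hmono _ _ l8
  rw [hm, mult_idem hm hmono] at h2
  have dir2 : imp (imp x (φ y)) (imp (φ x) (φ y)) = one := exch h2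
  have key : imp x (φ y) = imp (φ x) (φ y) := imp_antisymm _ _ dir2 dir1
  rw [hm x y, key]

/-- `φ` is a closure endomorphism iff it is a monotone multiplier. -/
theorem closureEndo_iff_monotone_multiplier (φ : A → A) :
    IsClosureEndo φ ↔
      (IsMultiplier φ ∧ ∀ x y : A, le x y → le (φ x) (φ y)) := by
  constructor
  · rintro ⟨hend, hinfl, hidem, hmono⟩
    refine ⟨?_, hmono⟩
    intro x y
    rw [hend]
    have d1 : imp (imp (φ x) (φ y)) (imp x (φ y)) = one := anti _ (hinfl x)
    have d2 : le (imp x (φ y)) (φ (imp x (φ y))) := hinfl _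
    rw [hend, hidem] at d2
    exact imp_antisymm _ _ d1 d2
  · rintro ⟨hm, hmono⟩
    exact ⟨mult_endo hm hmono, fun x => mult_infl hm x, mult_idem hm hmono, hmono⟩

end HilbertAlgebra
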